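/- Let A : ℝ → Matrix (Fin p) (Fin p) ℂ be bounded and continuous with fundamental matrix Φ_A, let P be a constant matrix with P² = P that commutes with Φ_A(t) for every t ∈ ℝ, and suppose there are constants c, α > 0 with ‖Ψ_A(t,s)·P‖ ≤ c·e^{−α(t−s)} for all t ≥ s. Then there exist constants c₁ > 0 and α' ∈ (0, α) such that for every ξ ∈ ℝ and all t ≥ s, ‖Ψ_A(t+ξ, s+ξ)·P − Ψ_A(t,s)·P‖ ≤ c₁ · (sup_{r∈ℝ} ‖A(r+ξ) − A(r)‖) · e^{−α'(t−s)}. In particular, if sup_{r∈ℝ} ‖A(r+ξ) − A(r)‖ ≤ ε then ‖Ψ_A(t+ξ, s+ξ)·P − Ψ_A(t,s)·P‖ ≤ c₁·ε·e^{−α'(t−s)} for all t ≥ s. -/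

import Mathlib

open MeasureTheory Filter Topology

attribute [local instance] Matrix.linftyOpNormedAddCommGroup Matrix.linftyOpNormedRing
  Matrix.linftyOpNormedAlgebra

/-- `Φ` is a fundamental matrix of `y' = A(t) y`: it is differentiable with
`Φ'(t) = A(t) Φ(t)` and `Φ(t)` invertible for every `t`. -/
def IsFundamentalMatrix {p : ℕ} (A Φ : ℝ → Matrix (Fin p) (Fin p) ℂ) : Prop :=
  (∀ t : ℝ, HasDerivAt Φ (A t * Φ t) t) ∧ ∀ t : ℝ, IsUnit (Φ t)

/-! The shifted fundamental matrix `Φ(· + ξ)` solves the system with generator `A(· + ξ)`, so it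
suffices to compare the evolutions of two systems `Φ' = AΦ`, `Θ' = BΘ` sharing the dichotomy.
By variation of constants, `g(r) = P Φ(t) Φ(r)⁻¹ Θ(r) Θ(s)⁻¹ P` runs from `Φ(t)Φ(s)⁻¹P` to
`Θ(t)Θ(s)⁻¹P` (the projection commutes with both evolutions and is absorbed at the endpoints) with
derivative `Φ(t)Φ(r)⁻¹P · (B(r) - A(r)) · Θ(r)Θ(s)⁻¹P`, which the dichotomy bounds by
`c² M e^{-α(t-s)}`. The mean value inequality then gives `c² M (t - s) e^{-α(t-s)}`, and halving the
exponent absorbs the factor `t - s`. -/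

open Real Set Ring

theorem Commute.ringInverse_right {M₀ : Type*} [MonoidWithZero M₀] {a b : M₀}
    (h : Commute a b) (hb : IsUnit b) : Commute a b⁻¹ʳ := by
  obtain ⟨u, rfl⟩ := hb
  rw [Ring.inverse_unit]
  exact h.units_inv_right

theorem IsIdempotentElem.mul_mul_self_of_commute {M : Type*} [Semigroup M] {P x : M}
    (hP : IsIdempotentElem P) (h : Commute P x) : P * x * P = x * P := by
  rw [h.eq, mul_assoc, hP.eq]

theorem exp_neg_mul_mul_le {α : ℝ} (hα : 0 < α) (x : ℝ) :
    exp (-α * x) * x ≤ 2 / α * exp (-(α / 2) * x) := by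
  have hx : x ≤ 2 / α * exp (α / 2 * x) := by
    have := add_one_le_exp (α / 2 * x)
    rw [div_mul_eq_mul_div, le_div_iff₀ hα]
    linarith
  calc exp (-α * x) * x ≤ exp (-α * x) * (2 / α * exp (α / 2 * x)) := by gcongr
    _ = 2 / α * exp (-(α / 2) * x) := by rw [mul_left_comm, ← exp_add]; ring_nf

section Evolution

variable {R : Type*} [NormedRing R] [NormedAlgebra ℝ R] [CompleteSpace R]

theorem HasDerivAt.ringInverse_of_hasDerivAt_mul {Φ : ℝ → R} {a : R} {t : ℝ}
    (hΦ : HasDerivAt Φ (a * Φ t) t) (hu : IsUnit (Φ t)) :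
    HasDerivAt (fun r => (Φ r)⁻¹ʳ) (-((Φ t)⁻¹ʳ * a)) t := by
  obtain ⟨u, hu⟩ := hu
  refine ((hasFDerivAt_ringInverse (𝕜 := ℝ) u).comp_hasDerivAt_of_eq t hΦ hu).congr_deriv ?_
  simp [← hu, mul_assoc]

theorem HasDerivAt.ringInverse_mul_of_hasDerivAt_mul {A B Φ Θ : ℝ → R} {t : ℝ}
    (hΦ : HasDerivAt Φ (A t * Φ t) t) (hΦu : IsUnit (Φ t))
    (hΘ : HasDerivAt Θ (B t * Θ t) t) :
    HasDerivAt (fun r => (Φ r)⁻¹ʳ * Θ r) ((Φ t)⁻¹ʳ * ((B t - A t) * Θ t)) t := by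
  refine ((hΦ.ringInverse_of_hasDerivAt_mul hΦu).mul hΘ).congr_deriv ?_
  noncomm_ring

theorem norm_evolution_sub_le_of_norm_generator_sub_le {A B Φ Θ : ℝ → R} {P : R}
    {c α M s t : ℝ}
    (hΦ : ∀ r, HasDerivAt Φ (A r * Φ r) r) (hΦu : ∀ r, IsUnit (Φ r))
    (hΘ : ∀ r, HasDerivAt Θ (B r * Θ r) r) (hΘu : ∀ r, IsUnit (Θ r))
    (hP : IsIdempotentElem P) (hΦP : ∀ r, Commute P (Φ r)) (hΘP : ∀ r, Commute P (Θ r))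
    (hΦdich : ∀ t s, s ≤ t → ‖Φ t * (Φ s)⁻¹ʳ * P‖ ≤ c * exp (-α * (t - s)))
    (hΘdich : ∀ t s, s ≤ t → ‖Θ t * (Θ s)⁻¹ʳ * P‖ ≤ c * exp (-α * (t - s)))
    (hM : ∀ r, ‖B r - A r‖ ≤ M) (hst : s ≤ t) :
    ‖Θ t * (Θ s)⁻¹ʳ * P - Φ t * (Φ s)⁻¹ʳ * P‖ ≤ c ^ 2 * M * exp (-α * (t - s)) * (t - s) := by
  have hcomm : ∀ u v, Commute P (Φ u * (Φ v)⁻¹ʳ) := fun u v =>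
    (hΦP u).mul_right ((hΦP v).ringInverse_right (hΦu v))
  set g : ℝ → R := fun r => P * Φ t * ((Φ r)⁻¹ʳ * Θ r) * ((Θ s)⁻¹ʳ * P)
  have hg : ∀ r, HasDerivAt g
      (Φ t * (Φ r)⁻¹ʳ * P * (B r - A r) * (Θ r * (Θ s)⁻¹ʳ * P)) r := by
    intro r
    refine ((((hΦ r).ringInverse_mul_of_hasDerivAt_mul (hΦu r) (hΘ r)).const_mul
      (P * Φ t)).mul_const ((Θ s)⁻¹ʳ * P)).congr_deriv ?_
    rw [← (hcomm t r).eq]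
    simp only [mul_assoc]
  have hgt : g t = Θ t * (Θ s)⁻¹ʳ * P := by
    simp only [g, mul_assoc, Ring.mul_inverse_cancel_left _ _ (hΦu t)]
    simpa only [mul_assoc] using
      hP.mul_mul_self_of_commute ((hΘP t).mul_right ((hΘP s).ringInverse_right (hΘu s)))
  have hgs : g s = Φ t * (Φ s)⁻¹ʳ * P := by
    simp only [g, mul_assoc, Ring.mul_inverse_cancel_left _ _ (hΘu s)]
    simpa only [mul_assoc] using hP.mul_mul_self_of_commute (hcomm t s)
  have hbound : ∀ r ∈ Ico s t,
      ‖Φ t * (Φ r)⁻¹ʳ * P * (B r - A r) * (Θ r * (Θ s)⁻¹ʳ * P)‖ ≤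
        c ^ 2 * M * exp (-α * (t - s)) := by
    rintro r ⟨hsr, hrt⟩
    have hX := hΦdich t r hrt.le
    have hZ := hΘdich r s hsr
    have hX₀ := (norm_nonneg _).trans hX
    calc _ ≤ ‖Φ t * (Φ r)⁻¹ʳ * P‖ * ‖B r - A r‖ * ‖Θ r * (Θ s)⁻¹ʳ * P‖ := norm_mul₃_le
      _ ≤ c * exp (-α * (t - r)) * M * (c * exp (-α * (r - s))) := by
        refine mul_le_mul (mul_le_mul hX (hM r) (norm_nonneg _) hX₀) hZ (norm_nonneg _) ?_
        exact mul_nonneg hX₀ ((norm_nonneg _).trans (hM r))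
      _ = c ^ 2 * M * (exp (-α * (t - r)) * exp (-α * (r - s))) := by ring
      _ = c ^ 2 * M * exp (-α * (t - s)) := by rw [← exp_add]; ring_nf
  rw [← hgt, ← hgs]
  exact norm_image_sub_le_of_norm_deriv_le_segment' (fun r _ => (hg r).hasDerivWithinAt)
    hbound t (right_mem_Icc.2 hst)

theorem norm_shifted_evolution_sub_le {A Φ : ℝ → R} {P : R} {c α M ξ s t : ℝ}
    (hΦ : ∀ r, HasDerivAt Φ (A r * Φ r) r) (hΦu : ∀ r, IsUnit (Φ r))
    (hP : IsIdempotentElem P) (hΦP : ∀ r, Commute P (Φ r))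
    (hdich : ∀ t s, s ≤ t → ‖Φ t * (Φ s)⁻¹ʳ * P‖ ≤ c * exp (-α * (t - s))) (hα : 0 < α)
    (hM : ∀ r, ‖A (r + ξ) - A r‖ ≤ M) (hst : s ≤ t) :
    ‖Φ (t + ξ) * (Φ (s + ξ))⁻¹ʳ * P - Φ t * (Φ s)⁻¹ʳ * P‖ ≤
      2 * c ^ 2 / α * M * exp (-(α / 2) * (t - s)) := by
  have hdichξ : ∀ t s, s ≤ t → ‖Φ (t + ξ) * (Φ (s + ξ))⁻¹ʳ * P‖ ≤ c * exp (-α * (t - s)) :=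
    fun t s h => by simpa using hdich (t + ξ) (s + ξ) (by linarith)
  have hM₀ : 0 ≤ M := (norm_nonneg _).trans (hM 0)
  calc _ ≤ c ^ 2 * M * (exp (-α * (t - s)) * (t - s)) := by
        rw [← mul_assoc]
        exact norm_evolution_sub_le_of_norm_generator_sub_le hΦ hΦu
          (fun r => (hΦ (r + ξ)).comp_add_const r ξ) (fun r => hΦu (r + ξ)) hP hΦP
          (fun r => hΦP (r + ξ)) hdich hdichξ hM hst
    _ ≤ c ^ 2 * M * (2 / α * exp (-(α / 2) * (t - s))) :=
        mul_le_mul_of_nonneg_left (exp_neg_mul_mul_le hα _) (mul_nonneg (sq_nonneg c) hM₀)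
    _ = 2 * c ^ 2 / α * M * exp (-(α / 2) * (t - s)) := by ring

end Evolution

theorem bi_almost_periodicity_of_dichotomic_evolution {p : ℕ}
    (A ΦA : ℝ → Matrix (Fin p) (Fin p) ℂ)
    (hAb : ∃ C, ∀ t, ‖A t‖ ≤ C)
    (hΦA : IsFundamentalMatrix A ΦA)
    (P : Matrix (Fin p) (Fin p) ℂ) (hP : P * P = P)
    (hPcomm : ∀ t : ℝ, ΦA t * P = P * ΦA t)
    (c α : ℝ) (hc : 0 < c) (hα : 0 < α)
    (hdich : ∀ t s : ℝ, s ≤ t → ‖ΦA t * (ΦA s)⁻¹ * P‖ ≤ c * Real.exp (-α * (t - s))) :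
    ∃ c₁ > (0 : ℝ), ∃ α' : ℝ, 0 < α' ∧ α' < α ∧
      (∀ ξ : ℝ, ∀ t s : ℝ, s ≤ t →
        ‖ΦA (t + ξ) * (ΦA (s + ξ))⁻¹ * P - ΦA t * (ΦA s)⁻¹ * P‖ ≤
          c₁ * (⨆ r : ℝ, ‖A (r + ξ) - A r‖) * Real.exp (-α' * (t - s))) ∧
      (∀ ξ ε : ℝ, (∀ r : ℝ, ‖A (r + ξ) - A r‖ ≤ ε) → ∀ t s : ℝ, s ≤ t →
        ‖ΦA (t + ξ) * (ΦA (s + ξ))⁻¹ * P - ΦA t * (ΦA s)⁻¹ * P‖ ≤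
          c₁ * ε * Real.exp (-α' * (t - s))) := by
  obtain ⟨hΦd, hΦu⟩ := hΦA
  obtain ⟨C, hC⟩ := hAb
  simp only [Matrix.nonsing_inv_eq_ringInverse] at hdich ⊢
  have key : ∀ ξ M, (∀ r, ‖A (r + ξ) - A r‖ ≤ M) → ∀ t s, s ≤ t →
      ‖ΦA (t + ξ) * (ΦA (s + ξ))⁻¹ʳ * P - ΦA t * (ΦA s)⁻¹ʳ * P‖ ≤
        2 * c ^ 2 / α * M * exp (-(α / 2) * (t - s)) := fun ξ M hM t s hst =>
    norm_shifted_evolution_sub_le hΦd hΦu hP (fun t => (hPcomm t).symm)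
      hdich hα hM hst
  have hbdd : ∀ ξ, BddAbove (range fun r => ‖A (r + ξ) - A r‖) := fun ξ =>
    ⟨C + C, by rintro _ ⟨r, rfl⟩; exact (norm_sub_le _ _).trans (add_le_add (hC _) (hC _))⟩
  refine ⟨2 * c ^ 2 / α, by positivity, α / 2, half_pos hα, half_lt_self hα,
    fun ξ => key ξ _ (le_ciSup (hbdd ξ)), fun ξ ε hε => key ξ ε hε⟩
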